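/- Every user-defined aggregate specified by single, multi, and ereturn rules only (i.e., with no freturn rules) defines a mapping that is monotonic with respect to set containment, and can therefore be used without restriction in recursive rules; equivalently, the logic program giving the aggregate's semantics—consisting of the chain rules, the cagr rules applying single to the first chain element and multi along the chain, and the results rule applying ereturn along the chain—is a positive choice program, hence monotonic by the monotonicity theorem for positive choice programs. -/

import Mathlib

/-!
# STATEMENT 14

Every user-defined aggregate specified by `single`, `multi`, and `ereturn`
rules only (i.e. with no `freturn` rules) defines a mapping that is monotonic
with respect to set containment, and can therefore be used without restriction
in recursive rules.  Equivalently, the logic program giving the aggregate's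
semantics — consisting of the chain rules

  `chain(nil,nil).`
  `chain(X,Y) ← chain(_,X), d(Y), choice((X),(Y)), choice((Y),(X)).`

the `cagr` rules applying `single` to the first chain element and `multi`
along the chain,

  `cagr(Y,New)  ← chain(nil,Y), Y ≠ nil, single(Y,New).`
  `cagr(Y2,New) ← chain(Y1,Y2), cagr(Y1,Old), multi(Y2,Old,New).`

and the `results` rule applying `ereturn` along the chain

  `results(Yield) ← chain(Y1,Y2), cagr(Y1,Old), ereturn(Y2,Old,Yield).`

is a *positive choice program*, hence monotonic by the monotonicity theorem
for positive choice programs: enlarging the aggregated set `d` extends every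
choice model (and with it the set of early returns `results`).

The framework is as in Statement 0, with rules extended by (built-in)
inequality goals `t ≠ t'` (needed for the goal `Y ≠ nil`); choice models are
total stable models of the first-order equivalent `foe`.  The user-supplied
`single`, `multi` and `ereturn` relations enter the program as database
relations.
-/

/-- A ground normal logic-program rule over ground atoms `α`. -/
structure GRule (α : Type) where
  head : α
  pos : Set α
  neg : Set α

/-- A ground normal logic program is a set of ground rules. -/
abbrev GProgram (α : Type) := Set (GRule α)

/-- `M` satisfies a ground rule. -/
def GRule.Sat {α : Type} (r : GRule α) (M : Set α) : Prop :=
  r.pos ⊆ M → (∀ a ∈ r.neg, a ∉ M) → r.head ∈ M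

/-- `M` is a model of (i.e. closed under) the program `P`. -/
def IsModel {α : Type} (P : GProgram α) (M : Set α) : Prop := ∀ r ∈ P, r.Sat M

/-- The Gelfond–Lifschitz reduct of `P` with respect to `M`: delete every rule
whose negative body intersects `M`, and delete the negative bodies of the
remaining rules. -/
def reduct {α : Type} (P : GProgram α) (M : Set α) : GProgram α :=
  {r | ∃ r' ∈ P, (∀ a ∈ r'.neg, a ∉ M) ∧ r = ⟨r'.head, r'.pos, ∅⟩}

/-- The least (Herbrand) model of a program: the intersection of all models. -/
def leastModel {α : Type} (P : GProgram α) : Set α := ⋂₀ {N | IsModel P N}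

/-- `M` is a (total, two-valued) stable model of `P` in the sense of
Gelfond–Lifschitz: `M` is the least model of the reduct of `P` by `M`.
Every such model is total: each atom is either true (in `M`) or false. -/
def IsStableModel {α : Type} (P : GProgram α) (M : Set α) : Prop :=
  M = leastModel (reduct P M)

/-! ## Datalog with choice goals -/

/-- Terms: variables (named by naturals) and constants from `C`. -/
inductive Term (C : Type) where
  | var (v : ℕ)
  | const (c : C)

/-- A relational schema: predicate symbols with arities. -/
structure Schema where
  pred : Type
  ar : pred → ℕ

/-- A (possibly non-ground) atom over schema `S` and constants `C`. -/
structure Atom (S : Schema) (C : Type) where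
  p : S.pred
  args : Fin (S.ar p) → Term C

/-- A ground atom. -/
structure GAtom (S : Schema) (C : Type) where
  p : S.pred
  args : Fin (S.ar p) → C

/-- A Datalog rule whose body may additionally contain choice goals
`choice((X),(Y))`, recorded in `cgoals` as pairs `(X, Y)` of disjoint lists of
variables, with nonempty right side `Y`. -/
structure CRule (S : Schema) (C : Type) where
  head : Atom S C
  pos : List (Atom S C)
  neg : List (Atom S C)
  cgoals : List (List ℕ × List ℕ)
  cgoals_disjoint : ∀ g ∈ cgoals, ∀ v ∈ g.1, v ∉ g.2
  cgoals_right_ne : ∀ g ∈ cgoals, g.2 ≠ []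
  /-- inequality goals `t ≠ t'` in the body (e.g. `Y ≠ nil`) -/
  ineqs : List (Term C × Term C)

/-- A choice program: a finite list of rules, possibly with choice goals. -/
abbrev CProgram (S : Schema) (C : Type) := List (CRule S C)

/-- A choice program is *positive* when its non-choice goals contain no
negation. -/
def CProgram.Positive {S : Schema} {C : Type} (P : CProgram S C) : Prop :=
  ∀ r ∈ P, r.neg = []

def Term.eval {C : Type} (ν : ℕ → C) : Term C → C
  | .var v => ν v
  | .const c => c

def Atom.ground {S : Schema} {C : Type} (a : Atom S C) (ν : ℕ → C) : GAtom S C :=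
  ⟨a.p, fun i => (a.args i).eval ν⟩

/-- `W`: the list of all variables occurring in the choice goals of a rule. -/
def CRule.W {S : Schema} {C : Type} (r : CRule S C) : List ℕ :=
  (r.cgoals.flatMap fun g => g.1 ++ g.2).dedup

/-- Atoms of the first-order equivalent `foe(P)`: the original (base) atoms
together with `chosen_r` and `diffChoice_r` atoms for each choice rule `r`
(rules are referred to by their position in the program). -/
inductive FAtom (S : Schema) (C : Type) where
  | base (a : GAtom S C)
  | chosen (r : ℕ) (w : List C)
  | diff (r : ℕ) (w : List C)

/-- The (ground) positive body of an instantiated rule, as base atoms. -/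
def posBody {S : Schema} {C : Type} (r : CRule S C) (ν : ℕ → C) : Set (FAtom S C) :=
  {x | ∃ a ∈ r.pos, x = FAtom.base (a.ground ν)}

/-- The (ground) negative body of an instantiated rule, as base atoms. -/
def negBody {S : Schema} {C : Type} (r : CRule S C) (ν : ℕ → C) : Set (FAtom S C) :=
  {x | ∃ a ∈ r.neg, x = FAtom.base (a.ground ν)}

/-- The first-order equivalent `foe(P)` of a choice program `P` over the
database `edb`, given as the set of its ground instances:

* facts of the database;
* rules without choice goals, unchanged;
* for each choice rule `r : A ← B(Z), choice((X₁),(Y₁)), …, choice((Xₖ),(Yₖ))`: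
  - `r′ : A ← B(Z), chosenᵣ(W)` where `W` lists all variables of the choice goals,
  - `chosenᵣ(W) ← B(Z), ¬ diffChoiceᵣ(W)`,
  - for each choice goal `choice((Xᵢ),(Yᵢ))`:
    `diffChoiceᵣ(W) ← chosenᵣ(W′), Yᵢ ≠ Yᵢ′` where `W′` agrees with `W` on `Xᵢ`
    (all other variables being fresh primed copies). -/
def foe {S : Schema} {C : Type} (P : CProgram S C) (edb : Set (GAtom S C)) :
    GProgram (FAtom S C) :=
  {r | ∃ a ∈ edb, r = ⟨FAtom.base a, ∅, ∅⟩} ∪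
  {r | ∃ i : Fin P.length, ∃ ν : ℕ → C,
        (∀ q ∈ (P.get i).ineqs, q.1.eval ν ≠ q.2.eval ν) ∧ (P.get i).cgoals = [] ∧
        r = ⟨FAtom.base ((P.get i).head.ground ν), posBody (P.get i) ν,
             negBody (P.get i) ν⟩} ∪
  {r | ∃ i : Fin P.length, ∃ ν : ℕ → C,
        (∀ q ∈ (P.get i).ineqs, q.1.eval ν ≠ q.2.eval ν) ∧ (P.get i).cgoals ≠ [] ∧
        r = ⟨FAtom.base ((P.get i).head.ground ν),
             insert (FAtom.chosen i ((P.get i).W.map ν)) (posBody (P.get i) ν),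
             negBody (P.get i) ν⟩} ∪
  {r | ∃ i : Fin P.length, ∃ ν : ℕ → C,
        (∀ q ∈ (P.get i).ineqs, q.1.eval ν ≠ q.2.eval ν) ∧ (P.get i).cgoals ≠ [] ∧
        r = ⟨FAtom.chosen i ((P.get i).W.map ν), posBody (P.get i) ν,
             insert (FAtom.diff i ((P.get i).W.map ν)) (negBody (P.get i) ν)⟩} ∪
  {r | ∃ i : Fin P.length, ∃ g ∈ (P.get i).cgoals, ∃ ν ν' : ℕ → C,
        (∀ v ∈ g.1, ν v = ν' v) ∧ (∃ v ∈ g.2, ν v ≠ ν' v) ∧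
        r = ⟨FAtom.diff i ((P.get i).W.map ν),
             {FAtom.chosen i ((P.get i).W.map ν')}, ∅⟩}

/-! ## The program defining the semantics of a user-defined aggregate -/

inductive UPred : Type where
  | d | single | multi | ereturn | chain | cagr | results
  deriving DecidableEq

def uAr : UPred → ℕ
  | .d => 1
  | .single => 2
  | .multi => 3
  | .ereturn => 3
  | .chain => 2
  | .cagr => 2
  | .results => 1

def uSchema : Schema := ⟨UPred, uAr⟩

/-- The (positive choice) program giving the semantics of a user-defined
aggregate specified by `single`, `multi` and `ereturn` rules only (no
`freturn`), over the set `d`.  Variables: in the chain rule `X = 0`, `Y = 1`,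
`Z = 2`; in the `cagr`/`results` rules as indicated. -/
def udaProg (C : Type) (nil : C) : CProgram uSchema C :=
  [ -- chain(nil,nil).
    ⟨⟨UPred.chain, ![Term.const nil, Term.const nil]⟩, [], [], [],
      by decide, by decide, []⟩,
    -- chain(X,Y) ← chain(Z,X), d(Y), choice((X),(Y)), choice((Y),(X)).
    ⟨⟨UPred.chain, ![Term.var 0, Term.var 1]⟩,
      [⟨UPred.chain, ![Term.var 2, Term.var 0]⟩, ⟨UPred.d, ![Term.var 1]⟩],
      [], [([0], [1]), ([1], [0])], by decide, by decide, []⟩,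
    -- cagr(Y,New) ← chain(nil,Y), Y ≠ nil, single(Y,New).   (Y = 0, New = 1)
    ⟨⟨UPred.cagr, ![Term.var 0, Term.var 1]⟩,
      [⟨UPred.chain, ![Term.const nil, Term.var 0]⟩,
       ⟨UPred.single, ![Term.var 0, Term.var 1]⟩],
      [], [], by decide, by decide, [(Term.var 0, Term.const nil)]⟩,
    -- cagr(Y2,New) ← chain(Y1,Y2), cagr(Y1,Old), multi(Y2,Old,New).
    --   (Y1 = 0, Y2 = 1, Old = 2, New = 3)
    ⟨⟨UPred.cagr, ![Term.var 1, Term.var 3]⟩,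
      [⟨UPred.chain, ![Term.var 0, Term.var 1]⟩,
       ⟨UPred.cagr, ![Term.var 0, Term.var 2]⟩,
       ⟨UPred.multi, ![Term.var 1, Term.var 2, Term.var 3]⟩],
      [], [], by decide, by decide, []⟩,
    -- results(Yield) ← chain(Y1,Y2), cagr(Y1,Old), ereturn(Y2,Old,Yield).
    --   (Y1 = 0, Y2 = 1, Old = 2, Yield = 3)
    ⟨⟨UPred.results, ![Term.var 3]⟩,
      [⟨UPred.chain, ![Term.var 0, Term.var 1]⟩,
       ⟨UPred.cagr, ![Term.var 0, Term.var 2]⟩,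
       ⟨UPred.ereturn, ![Term.var 1, Term.var 2, Term.var 3]⟩],
      [], [], by decide, by decide, []⟩ ]

/-- The database: the aggregated set `d = D` and the user-supplied `single`,
`multi` and `ereturn` relations. -/
def udaEdb {C : Type} (D : Set C) (sg : C → C → Prop) (ml er : C → C → C → Prop) :
    Set (GAtom uSchema C) :=
  {a | ∃ c ∈ D, a = ⟨UPred.d, ![c]⟩} ∪
  {a | ∃ x y, sg x y ∧ a = ⟨UPred.single, ![x, y]⟩} ∪
  {a | ∃ x y z, ml x y z ∧ a = ⟨UPred.multi, ![x, y, z]⟩} ∪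
  {a | ∃ x y z, er x y z ∧ a = ⟨UPred.ereturn, ![x, y, z]⟩}

/-!
A choice model of a positive choice program is determined by its set `K` of chosen tuples: it
is the least model of the reduct in which exactly the `chosen` rules for tuples in `K` are kept,
and `K` is a conflict-free set of candidates, maximal among such. Enlarging the database keeps
every candidate a candidate, so `K` is still conflict-free there, and Zorn's lemma extends it to a
maximal conflict-free set `K'` of candidates. The model determined by `K'` is a choice model for
the larger database, and it contains the old one because least models grow with the program.
-/

section Ground

variable {α : Type} {P Q : GProgram α} {X Y : Set α}

lemma leastModel_subset_of_isModel {N : Set α} (h : IsModel P N) : leastModel P ⊆ N :=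
  Set.sInter_subset_of_mem h

lemma leastModel_mono (h : P ⊆ Q) : leastModel P ⊆ leastModel Q :=
  Set.sInter_subset_sInter fun _ hN r hr => hN r (h hr)

lemma reduct_mono (hPQ : P ⊆ Q) (hYX : Y ⊆ X) : reduct P X ⊆ reduct Q Y := by
  rintro _ ⟨r, hr, hneg, rfl⟩
  exact ⟨r, hPQ hr, fun a ha haY => hneg a ha (hYX haY), rfl⟩

lemma head_mem_leastModel_reduct {r : GRule α} (hr : r ∈ P)
    (hpos : r.pos ⊆ leastModel (reduct P X)) (hneg : ∀ a ∈ r.neg, a ∉ X) :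
    r.head ∈ leastModel (reduct P X) :=
  Set.mem_sInter.2 fun _ hN =>
    hN ⟨r.head, r.pos, ∅⟩ ⟨r, hr, hneg, rfl⟩ (hpos.trans (leastModel_subset_of_isModel hN))
      (by simp)

lemma exists_rule_of_mem_leastModel_reduct {a : α} (ha : a ∈ leastModel (reduct P X)) :
    ∃ r ∈ P, r.head = a ∧ r.pos ⊆ leastModel (reduct P X) ∧ ∀ b ∈ r.neg, b ∉ X := by
  set L := leastModel (reduct P X)
  have hsupported : IsModel (reduct P X)
      {a | a ∈ L ∧ ∃ r ∈ P, r.head = a ∧ r.pos ⊆ L ∧ ∀ b ∈ r.neg, b ∉ X} := by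
    rintro _ ⟨r, hr, hneg, rfl⟩ hpos -
    have hposL : r.pos ⊆ L := fun b hb => (hpos hb).1
    exact ⟨head_mem_leastModel_reduct (r := r) hr hposL hneg, r, hr, rfl, hposL, hneg⟩
  exact (leastModel_subset_of_isModel hsupported ha).2

lemma leastModel_reduct_congr
    (h : ∀ r ∈ P, r.pos ⊆ leastModel (reduct P X) → ∀ a ∈ r.neg, a ∈ X ↔ a ∈ Y) :
    leastModel (reduct P Y) = leastModel (reduct P X) := by
  have hYX : leastModel (reduct P Y) ⊆ leastModel (reduct P X) := by
    refine leastModel_subset_of_isModel ?_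
    rintro _ ⟨r, hr, hneg, rfl⟩ hpos -
    exact head_mem_leastModel_reduct (r := r) hr hpos fun a ha =>
      mt (h r hr hpos a ha).1 (hneg a ha)
  refine hYX.antisymm (leastModel_subset_of_isModel ?_)
  rintro _ ⟨r, hr, hneg, rfl⟩ hpos -
  exact head_mem_leastModel_reduct (r := r) hr hpos fun a ha =>
    mt (h r hr (hpos.trans hYX) a ha).2 (hneg a ha)

end Ground

namespace CProgram

variable {S : Schema} {C : Type} (P : CProgram S C)

/-- `(i, w)` is a candidate over `N` when some instance of the `i`-th rule, a choice rule, has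
its body true in `N` and its choice variables `W` valued `w`. -/
def IsCandidate (N : Set (FAtom S C)) (p : ℕ × List C) : Prop :=
  ∃ i : Fin P.length, ∃ ν : ℕ → C, (∀ q ∈ (P.get i).ineqs, q.1.eval ν ≠ q.2.eval ν) ∧
    (P.get i).cgoals ≠ [] ∧ posBody (P.get i) ν ⊆ N ∧ p = ((i : ℕ), (P.get i).W.map ν)

/-- Two tuples chosen by the same rule conflict when they violate one of its choice goals. -/
def Conflict (p q : ℕ × List C) : Prop :=
  ∃ i : Fin P.length, ∃ g ∈ (P.get i).cgoals, ∃ ν ν' : ℕ → C,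
    (∀ v ∈ g.1, ν v = ν' v) ∧ (∃ v ∈ g.2, ν v ≠ ν' v) ∧
    p = ((i : ℕ), (P.get i).W.map ν) ∧ q = ((i : ℕ), (P.get i).W.map ν')

variable {P}

lemma IsCandidate.mono {N N' : Set (FAtom S C)} {p : ℕ × List C} (h : P.IsCandidate N p)
    (hN : N ⊆ N') : P.IsCandidate N' p := by
  obtain ⟨i, ν, hq, hc, hpos, rfl⟩ := h
  exact ⟨i, ν, hq, hc, hpos.trans hN, rfl⟩

lemma Conflict.symm {p q : ℕ × List C} (h : P.Conflict p q) : P.Conflict q p := by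
  obtain ⟨i, g, hg, ν, ν', hagree, ⟨v, hv, hne⟩, rfl, rfl⟩ := h
  exact ⟨i, g, hg, ν', ν, fun v hv => (hagree v hv).symm, ⟨v, hv, hne.symm⟩, rfl, rfl⟩

lemma conflict_irrefl (p : ℕ × List C) : ¬ P.Conflict p p := by
  rintro ⟨i, g, hg, ν, ν', -, ⟨v, hv, hne⟩, rfl, hp⟩
  have hvW : v ∈ (P.get i).W :=
    List.mem_dedup.2 (List.mem_flatMap.2 ⟨g, hg, List.mem_append_right _ hv⟩)
  exact hne (List.map_inj_left.1 (Prod.mk.inj hp).2 v hvW)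

lemma notMem_negBody (hP : P.Positive) {i : Fin P.length} {ν : ℕ → C} {a : FAtom S C} :
    a ∉ negBody (P.get i) ν := by
  rintro ⟨b, hb, -⟩
  rw [hP _ (List.get_mem P i)] at hb
  exact List.not_mem_nil hb

variable {e e' : Set (GAtom S C)} {X : Set (FAtom S C)}

lemma foe_mono (he : e ⊆ e') : foe P e ⊆ foe P e' := by
  unfold foe
  gcongr

lemma exists_isCandidate_of_mem_neg (hP : P.Positive) {N : Set (FAtom S C)} {r : GRule (FAtom S C)}
    (hr : r ∈ foe P e) (hpos : r.pos ⊆ N) {a : FAtom S C} (ha : a ∈ r.neg) :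
    ∃ n w, a = FAtom.diff n w ∧ P.IsCandidate N (n, w) := by
  rcases hr with ((((⟨_, -, rfl⟩ | ⟨_, _, -, -, rfl⟩) | ⟨_, _, -, -, rfl⟩) |
    ⟨i, ν, hq, hc, rfl⟩) | ⟨_, _, -, _, _, -, -, rfl⟩)
  · exact absurd ha (Set.notMem_empty a)
  · exact absurd ha (notMem_negBody hP)
  · exact absurd ha (notMem_negBody hP)
  · rcases ha with rfl | ha
    · exact ⟨_, _, rfl, i, ν, hq, hc, hpos, rfl⟩
    · exact absurd ha (notMem_negBody hP)
  · exact absurd ha (Set.notMem_empty a)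

theorem leastModel_reduct_foe_congr (hP : P.Positive) {Y : Set (FAtom S C)}
    (h : ∀ n w, P.IsCandidate (leastModel (reduct (foe P e) X)) (n, w) →
      (FAtom.diff n w ∈ X ↔ FAtom.diff n w ∈ Y)) :
    leastModel (reduct (foe P e) Y) = leastModel (reduct (foe P e) X) :=
  leastModel_reduct_congr fun _ hr hpos _ ha => by
    obtain ⟨n, w, rfl, hc⟩ := exists_isCandidate_of_mem_neg hP hr hpos ha
    exact h n w hc

theorem chosen_mem_leastModel_reduct_foe_iff (hP : P.Positive) {n : ℕ} {w : List C} :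
    FAtom.chosen n w ∈ leastModel (reduct (foe P e) X) ↔
      FAtom.diff n w ∉ X ∧ P.IsCandidate (leastModel (reduct (foe P e) X)) (n, w) := by
  constructor
  · intro h
    obtain ⟨r, hr, hhead, hpos, hneg⟩ := exists_rule_of_mem_leastModel_reduct h
    rcases hr with ((((⟨_, -, rfl⟩ | ⟨_, _, -, -, rfl⟩) | ⟨_, _, -, -, rfl⟩) |
      ⟨i, ν, hq, hc, rfl⟩) | ⟨_, _, -, _, _, -, -, rfl⟩) <;> cases hhead
    exact ⟨hneg _ (Set.mem_insert _ _), i, ν, hq, hc, hpos, rfl⟩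
  · rintro ⟨hX, i, ν, hq, hc, hpos, hp⟩
    obtain ⟨rfl, rfl⟩ := Prod.mk.inj hp
    have hr : (⟨FAtom.chosen i ((P.get i).W.map ν), posBody (P.get i) ν,
        insert (FAtom.diff i ((P.get i).W.map ν)) (negBody (P.get i) ν)⟩ : GRule (FAtom S C)) ∈
        foe P e :=
      Or.inl (Or.inr ⟨i, ν, hq, hc, rfl⟩)
    refine head_mem_leastModel_reduct hr hpos ?_
    rintro a (rfl | ha)
    exacts [hX, absurd ha (notMem_negBody hP)]

theorem diff_mem_leastModel_reduct_foe_iff {n : ℕ} {w : List C} :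
    FAtom.diff n w ∈ leastModel (reduct (foe P e) X) ↔
      ∃ q : ℕ × List C, FAtom.chosen q.1 q.2 ∈ leastModel (reduct (foe P e) X) ∧
        P.Conflict (n, w) q := by
  constructor
  · intro h
    obtain ⟨r, hr, hhead, hpos, -⟩ := exists_rule_of_mem_leastModel_reduct h
    rcases hr with ((((⟨_, -, rfl⟩ | ⟨_, _, -, -, rfl⟩) | ⟨_, _, -, -, rfl⟩) |
      ⟨_, _, -, -, rfl⟩) | ⟨i, g, hg, ν, ν', hagree, hdiffer, rfl⟩) <;> cases hhead
    exact ⟨(i, (P.get i).W.map ν'), hpos rfl, i, g, hg, ν, ν', hagree, hdiffer, rfl, rfl⟩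
  · rintro ⟨q, hq, i, g, hg, ν, ν', hagree, hdiffer, hp, rfl⟩
    obtain ⟨rfl, rfl⟩ := Prod.mk.inj hp
    have hr : (⟨FAtom.diff i ((P.get i).W.map ν), {FAtom.chosen i ((P.get i).W.map ν')}, ∅⟩ :
        GRule (FAtom S C)) ∈ foe P e :=
      Or.inr ⟨i, g, hg, ν, ν', hagree, hdiffer, rfl⟩
    exact head_mem_leastModel_reduct hr (Set.singleton_subset_iff.2 hq) (by simp)

/-- Reducing by the `diff` atoms of the tuples outside `K` keeps exactly the `chosen` rules for
tuples in `K`. -/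
def diffsOutside (K : Set (ℕ × List C)) : Set (FAtom S C) :=
  {a | ∃ p ∉ K, a = FAtom.diff p.1 p.2}

@[simp]
lemma diff_mem_diffsOutside {K : Set (ℕ × List C)} {n : ℕ} {w : List C} :
    (FAtom.diff n w : FAtom S C) ∈ diffsOutside K ↔ (n, w) ∉ K := by
  simp [diffsOutside]

lemma diffsOutside_anti {K K' : Set (ℕ × List C)} (h : K ⊆ K') :
    (diffsOutside K' : Set (FAtom S C)) ⊆ diffsOutside K := by
  rintro _ ⟨p, hp, rfl⟩
  exact ⟨p, fun hpK => hp (h hpK), rfl⟩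

variable (P) in
def fixedChoiceModel (e : Set (GAtom S C)) (K : Set (ℕ × List C)) : Set (FAtom S C) :=
  leastModel (reduct (foe P e) (diffsOutside K))

lemma fixedChoiceModel_mono {K K' : Set (ℕ × List C)} (he : e ⊆ e') (hK : K ⊆ K') :
    P.fixedChoiceModel e K ⊆ P.fixedChoiceModel e' K' :=
  leastModel_mono (reduct_mono (foe_mono he) (diffsOutside_anti hK))

lemma chosen_mem_fixedChoiceModel_iff (hP : P.Positive) {K : Set (ℕ × List C)} {n : ℕ}
    {w : List C} :
    FAtom.chosen n w ∈ P.fixedChoiceModel e K ↔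
      (n, w) ∈ K ∧ P.IsCandidate (P.fixedChoiceModel e K) (n, w) := by
  rw [fixedChoiceModel, chosen_mem_leastModel_reduct_foe_iff hP, diff_mem_diffsOutside, not_not]

variable (P) in
def IsChoiceSet (e : Set (GAtom S C)) (K : Set (ℕ × List C)) : Prop :=
  (∀ p ∈ K, ∀ q ∈ K, ¬ P.Conflict p q) ∧ ∀ p ∈ K, P.IsCandidate (P.fixedChoiceModel e K) p

lemma IsChoiceSet.mono_edb {K : Set (ℕ × List C)} (hK : P.IsChoiceSet e K) (he : e ⊆ e') :
    P.IsChoiceSet e' K :=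
  ⟨hK.1, fun p hp => (hK.2 p hp).mono (fixedChoiceModel_mono he subset_rfl)⟩

lemma IsChoiceSet.insert {K : Set (ℕ × List C)} {p : ℕ × List C} (hK : P.IsChoiceSet e K)
    (hp : P.IsCandidate (P.fixedChoiceModel e K) p) (hfree : ∀ q ∈ K, ¬ P.Conflict p q) :
    P.IsChoiceSet e (insert p K) := by
  have hmono := fixedChoiceModel_mono (P := P) (subset_refl e) (Set.subset_insert p K)
  refine ⟨?_, ?_⟩
  · rintro q (rfl | hq) q' (rfl | hq')
    · exact conflict_irrefl _
    · exact hfree q' hq'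
    · exact fun h => hfree q hq h.symm
    · exact hK.1 q hq q' hq'
  · rintro q (rfl | hq)
    · exact hp.mono hmono
    · exact (hK.2 q hq).mono hmono

lemma exists_maximal_isChoiceSet {K₀ : Set (ℕ × List C)} (hK₀ : P.IsChoiceSet e K₀) :
    ∃ K, K₀ ⊆ K ∧ Maximal (P.IsChoiceSet e) K := by
  refine zorn_subset_nonempty {K | P.IsChoiceSet e K} (fun c hc hchain _ => ?_) K₀ hK₀
  refine ⟨⋃₀ c, ⟨?_, ?_⟩, fun K hK => Set.subset_sUnion_of_mem hK⟩
  · rintro p ⟨K, hK, hpK⟩ q ⟨K', hK', hqK'⟩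
    rcases hchain.total hK hK' with h | h
    · exact (hc hK').1 p (h hpK) q hqK'
    · exact (hc hK).1 p hpK q (h hqK')
  · rintro p ⟨K, hK, hpK⟩
    exact ((hc hK).2 p hpK).mono (fixedChoiceModel_mono subset_rfl (Set.subset_sUnion_of_mem hK))

/-- A maximal choice set is blocked at every other candidate, which makes its model stable. -/
theorem isStableModel_fixedChoiceModel_of_maximal (hP : P.Positive) {K : Set (ℕ × List C)}
    (hK : Maximal (P.IsChoiceSet e) K) :
    IsStableModel (foe P e) (P.fixedChoiceModel e K) := by
  obtain ⟨hKset, hmax⟩ := hK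
  have hchosen : ∀ q : ℕ × List C, FAtom.chosen q.1 q.2 ∈ P.fixedChoiceModel e K ↔ q ∈ K :=
    fun q => (chosen_mem_fixedChoiceModel_iff hP).trans ⟨And.left, fun hq => ⟨hq, hKset.2 q hq⟩⟩
  refine (leastModel_reduct_foe_congr hP fun n w hc => ?_).symm
  have hdiff : FAtom.diff n w ∈ P.fixedChoiceModel e K ↔
      ∃ q : ℕ × List C, FAtom.chosen q.1 q.2 ∈ P.fixedChoiceModel e K ∧ P.Conflict (n, w) q :=
    diff_mem_leastModel_reduct_foe_iff
  change _ ↔ FAtom.diff n w ∈ P.fixedChoiceModel e K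
  simp only [diff_mem_diffsOutside, hdiff, hchosen]
  constructor
  · intro hnK
    by_contra! hnone
    exact hnK (hmax (hKset.insert hc hnone) (Set.subset_insert _ _) (Set.mem_insert _ _))
  · rintro ⟨q, hq, hconf⟩ hnK
    exact hKset.1 _ hnK q hq hconf

end CProgram

namespace IsStableModel

open CProgram

variable {S : Schema} {C : Type} {P : CProgram S C} {e : Set (GAtom S C)}
  {M : Set (FAtom S C)}

lemma chosen_mem_iff (hP : P.Positive) (hM : IsStableModel (foe P e) M) {n : ℕ} {w : List C} :
    FAtom.chosen n w ∈ M ↔ FAtom.diff n w ∉ M ∧ P.IsCandidate M (n, w) := by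
  have h := chosen_mem_leastModel_reduct_foe_iff (e := e) (X := M) hP (n := n) (w := w)
  rwa [← hM] at h

lemma diff_mem_iff (hM : IsStableModel (foe P e) M) {n : ℕ} {w : List C} :
    FAtom.diff n w ∈ M ↔ ∃ q : ℕ × List C, FAtom.chosen q.1 q.2 ∈ M ∧ P.Conflict (n, w) q := by
  have h := diff_mem_leastModel_reduct_foe_iff (P := P) (e := e) (X := M) (n := n) (w := w)
  rwa [← hM] at h

theorem eq_fixedChoiceModel (hP : P.Positive) (hM : IsStableModel (foe P e) M) :
    M = P.fixedChoiceModel e {q | FAtom.chosen q.1 q.2 ∈ M} := by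
  refine hM.trans (leastModel_reduct_foe_congr hP fun n w hc => ?_).symm
  rw [← hM] at hc
  simp only [diff_mem_diffsOutside, Set.mem_ofPred_eq, hM.chosen_mem_iff hP]
  tauto

theorem isChoiceSet (hP : P.Positive) (hM : IsStableModel (foe P e) M) :
    P.IsChoiceSet e {q | FAtom.chosen q.1 q.2 ∈ M} := by
  rw [IsChoiceSet, ← hM.eq_fixedChoiceModel hP]
  refine ⟨fun p hp q hq hpq => ?_, fun p hp => ((hM.chosen_mem_iff hP).1 hp).2⟩
  exact ((hM.chosen_mem_iff hP).1 hp).1 (hM.diff_mem_iff.2 ⟨q, hq, hpq⟩)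

end IsStableModel

theorem CProgram.Positive.exists_isStableModel_superset {S : Schema} {C : Type}
    {P : CProgram S C} {e e' : Set (GAtom S C)} {M : Set (FAtom S C)} (hP : P.Positive)
    (he : e ⊆ e') (hM : IsStableModel (foe P e) M) :
    ∃ M', IsStableModel (foe P e') M' ∧ M ⊆ M' := by
  obtain ⟨K, hK₀K, hK⟩ := CProgram.exists_maximal_isChoiceSet ((hM.isChoiceSet hP).mono_edb he)
  refine ⟨P.fixedChoiceModel e' K, CProgram.isStableModel_fixedChoiceModel_of_maximal hP hK, ?_⟩
  calc M = P.fixedChoiceModel e {q | FAtom.chosen q.1 q.2 ∈ M} := hM.eq_fixedChoiceModel hP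
    _ ⊆ P.fixedChoiceModel e' K := CProgram.fixedChoiceModel_mono he hK₀K

lemma udaProg_positive {C : Type} (nil : C) : (udaProg C nil).Positive := by
  intro r hr
  simp only [udaProg, List.mem_cons, List.not_mem_nil, or_false] at hr
  rcases hr with rfl | rfl | rfl | rfl | rfl <;> rfl

lemma udaEdb_mono {C : Type} {D D' : Set C} {sg : C → C → Prop} {ml er : C → C → C → Prop}
    (h : D ⊆ D') : udaEdb D sg ml er ⊆ udaEdb D' sg ml er := by
  unfold udaEdb
  gcongr

theorem uda_without_freturn_is_monotonic_general
    {C : Type} (nil : C) (sg : C → C → Prop) (ml er : C → C → C → Prop)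
    (D D' : Set C) (hsub : D ⊆ D') :
    (udaProg C nil).Positive ∧
    ∀ M, IsStableModel (foe (udaProg C nil) (udaEdb D sg ml er)) M →
      ∃ M', IsStableModel (foe (udaProg C nil) (udaEdb D' sg ml er)) M' ∧
        M ⊆ M' :=
  ⟨udaProg_positive nil, fun _ hM =>
    (udaProg_positive nil).exists_isStableModel_superset (udaEdb_mono hsub) hM⟩

/-- A user-defined aggregate given by `single`, `multi` and
`ereturn` rules only (no `freturn`) is monotonic with respect to set
containment: its defining logic program is a positive choice program, and
enlarging the aggregated set `D ⊆ D'` extends every choice model `M` of the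
program on `D` to a choice model `M' ⊇ M` of the program on `D'` (so, in
particular, the early returns `results` grow monotonically, and the aggregate
may be used without restriction in recursive rules). -/
theorem uda_without_freturn_is_monotonic
    {C : Type} (nil : C) (sg : C → C → Prop) (ml er : C → C → C → Prop)
    (D D' : Set C) (hfin : D'.Finite) (hnil : nil ∉ D') (hsub : D ⊆ D') :
    (udaProg C nil).Positive ∧
    ∀ M, IsStableModel (foe (udaProg C nil) (udaEdb D sg ml er)) M →
      ∃ M', IsStableModel (foe (udaProg C nil) (udaEdb D' sg ml er)) M' ∧
        M ⊆ M' :=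
  uda_without_freturn_is_monotonic_general nil sg ml er D D' hsub
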